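/- Weighted mean contraction (inequality (4.3) verifying condition C2 for the Markov switching model): let |ψ| < 1, p ≥ 1 an integer, C ∈ (0,1), a ≥ 0, b = (1 − |ψ|^p)/(1 − |ψ|), and assume C^p (a b + 1) < 1. Let ε₁,…,ε_p be integrable real random variables with E|ε_k| ≤ a, and for y ∈ ℝ set Y_p = ψ^p y + Σ_{k=0}^{p−1} ψ^k ε_{p−k}. If the random variable log( C^p (|Y_p| + 1)/(|y| + 1) ) is integrable, then E[ log( C^p (|Y_p| + 1)/(|y| + 1) ) ] ≤ log( C^p (a b + 1) ) < 0; in particular sup_{y ∈ ℝ} E[ log( C^p (|Y_p| + 1)/(|y| + 1) ) ] < 0. -/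

import Mathlib

/-!
The triangle inequality and the moment bounds give `E|Y_p| ≤ |ψ|^p |y| + a b`; since
`|ψ|^p ≤ 1`, the mean of the ratio `C^p (|Y_p| + 1) / (|y| + 1)` is at most `C^p (a b + 1)`
uniformly in `y`, and Jensen's inequality for the concave `log` bounds the mean log-ratio
by `log (C^p (a b + 1)) < 0`.
-/

open MeasureTheory Finset

section Integral

variable {Ω : Type*} [MeasurableSpace Ω] {μ : Measure Ω} [IsProbabilityMeasure μ]

theorem integral_log_le_log_of_integral_le {g : Ω → ℝ} {M : ℝ} (hg : ∀ᵐ ω ∂μ, 0 < g ω)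
    (hgi : Integrable g μ) (hlog : Integrable (fun ω => Real.log (g ω)) μ) (hM : 0 < M)
    (hgM : ∫ ω, g ω ∂μ ≤ M) : ∫ ω, Real.log (g ω) ∂μ ≤ Real.log M := by
  -- integrate the tangent line of `log` at `M`
  have htangent : ∀ᵐ ω ∂μ, Real.log (g ω) ≤ g ω / M + (Real.log M - 1) := by
    filter_upwards [hg] with ω hω
    have := Real.log_le_sub_one_of_pos (div_pos hω hM)
    rw [Real.log_div hω.ne' hM.ne'] at this
    linarith
  have hmean : (∫ ω, g ω ∂μ) / M ≤ 1 := (div_le_one hM).mpr hgM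
  calc ∫ ω, Real.log (g ω) ∂μ ≤ ∫ ω, (g ω / M + (Real.log M - 1)) ∂μ :=
        integral_mono_ae hlog ((hgi.div_const M).add (integrable_const _)) htangent
    _ = (∫ ω, g ω ∂μ) / M + (Real.log M - 1) := by
        rw [integral_add (hgi.div_const M) (integrable_const _), integral_div, integral_const,
          probReal_univ, one_smul]
    _ ≤ Real.log M := by linarith

theorem integral_abs_add_sum_mul_le {ι : Type*} (s : Finset ι) (c a : ℝ) (w : ι → ℝ)
    {X : ι → Ω → ℝ} (hX : ∀ k ∈ s, Integrable (X k) μ) (ha : ∀ k ∈ s, ∫ ω, |X k ω| ∂μ ≤ a) :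
    ∫ ω, |c + ∑ k ∈ s, w k * X k ω| ∂μ ≤ |c| + a * ∑ k ∈ s, |w k| := by
  have hsumi : Integrable (fun ω => ∑ k ∈ s, |w k| * |X k ω|) μ :=
    integrable_finsetSum _ fun k hk => (hX k hk).abs.const_mul _
  have hpointwise : ∀ ω, |c + ∑ k ∈ s, w k * X k ω| ≤ |c| + ∑ k ∈ s, |w k| * |X k ω| :=
    fun ω => (abs_add_le _ _).trans <| add_le_add_right
      ((abs_sum_le_sum_abs _ _).trans_eq (by simp only [abs_mul])) _
  have hLi : Integrable (fun ω => |c + ∑ k ∈ s, w k * X k ω|) μ :=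
    ((integrable_const c).add
      (integrable_finsetSum _ fun k hk => (hX k hk).const_mul (w k))).abs
  calc ∫ ω, |c + ∑ k ∈ s, w k * X k ω| ∂μ
      ≤ ∫ ω, (|c| + ∑ k ∈ s, |w k| * |X k ω|) ∂μ :=
        integral_mono hLi ((integrable_const _).add hsumi) hpointwise
    _ = |c| + ∑ k ∈ s, |w k| * ∫ ω, |X k ω| ∂μ := by
        rw [integral_add (integrable_const _) hsumi, integral_const, probReal_univ, one_smul,
          integral_finsetSum _ fun k hk => (hX k hk).abs.const_mul _]
        simp only [integral_const_mul]
    _ ≤ |c| + ∑ k ∈ s, |w k| * a := by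
        gcongr with k hk
        exact ha k hk
    _ = |c| + a * ∑ k ∈ s, |w k| := by rw [← sum_mul, mul_comm]

end Integral

theorem mul_add_one_div_abs_add_one_le {c e q r y : ℝ} (hc : 0 ≤ c) (hq : q ≤ 1) (hr : 0 ≤ r)
    (he : e ≤ q * |y| + r) : c * (e + 1) / (|y| + 1) ≤ c * (r + 1) := by
  rw [div_le_iff₀ (by positivity)]
  have : e + 1 ≤ (r + 1) * (|y| + 1) := by nlinarith [abs_nonneg y]
  nlinarith

theorem weighted_mean_contraction_general
    {Ω : Type*} [MeasurableSpace Ω] (μ : Measure Ω) [IsProbabilityMeasure μ]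
    (ψ a C : ℝ) (hψ : |ψ| < 1) (p : ℕ)
    (hC0 : 0 < C) (ha : 0 ≤ a)
    (b : ℝ) (hb : b = (1 - |ψ| ^ p) / (1 - |ψ|))
    (hsmall : C ^ p * (a * b + 1) < 1)
    (ε : ℕ → Ω → ℝ)
    (hint : ∀ k, 1 ≤ k → k ≤ p → Integrable (ε k) μ)
    (hbound : ∀ k, 1 ≤ k → k ≤ p → ∫ ω, |ε k ω| ∂μ ≤ a)
    (Y : ℝ → Ω → ℝ)
    (hY : ∀ y ω, Y y ω = ψ ^ p * y + ∑ k ∈ Finset.range p, ψ ^ k * ε (p - k) ω)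
    (hlogint : ∀ y : ℝ,
      Integrable (fun ω => Real.log (C ^ p * (|Y y ω| + 1) / (|y| + 1))) μ) :
    (∀ y : ℝ, ∫ ω, Real.log (C ^ p * (|Y y ω| + 1) / (|y| + 1)) ∂μ
        ≤ Real.log (C ^ p * (a * b + 1))) ∧
    Real.log (C ^ p * (a * b + 1)) < 0 ∧
    (⨆ y : ℝ, ∫ ω, Real.log (C ^ p * (|Y y ω| + 1) / (|y| + 1)) ∂μ) < 0 := by
  have hb_sum : b = ∑ k ∈ range p, |ψ| ^ k := by
    rw [hb, range_eq_Ico, geom_sum_Ico' hψ.ne (Nat.zero_le p), pow_zero]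
  have hab : 0 ≤ a * b := mul_nonneg ha (hb_sum ▸ by positivity)
  have hCp : 0 < C ^ p := pow_pos hC0 p
  have hlogM := Real.log_neg (by positivity) hsmall
  have hintε : ∀ k ∈ range p, Integrable (ε (p - k)) μ := fun k hk =>
    hint _ (by grind) (by grind)
  have hintY (y : ℝ) : Integrable (Y y) μ := by
    rw [funext (hY y)]
    exact (integrable_const _).add (integrable_finsetSum _ fun k hk => (hintε k hk).const_mul _)
  have hmeanY (y : ℝ) : ∫ ω, |Y y ω| ∂μ ≤ |ψ| ^ p * |y| + a * b := by
    simpa only [← hY, hb_sum, abs_mul, abs_pow] using integral_abs_add_sum_mul_le (range p)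
      (ψ ^ p * y) a (ψ ^ ·) hintε fun k hk => hbound _ (by grind) (by grind)
  have hmeanRatio (y : ℝ) :
      ∫ ω, C ^ p * (|Y y ω| + 1) / (|y| + 1) ∂μ ≤ C ^ p * (a * b + 1) := by
    rw [integral_div, integral_const_mul, integral_add (hintY y).abs (integrable_const 1),
      integral_const, probReal_univ, one_smul]
    exact mul_add_one_div_abs_add_one_le hCp.le (pow_le_one₀ (abs_nonneg ψ) hψ.le) hab (hmeanY y)
  have hratio_pos (y : ℝ) (ω : Ω) : 0 < C ^ p * (|Y y ω| + 1) / (|y| + 1) := by positivity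
  have hmain (y : ℝ) := integral_log_le_log_of_integral_le (.of_forall (hratio_pos y))
    ((((hintY y).abs.add (integrable_const 1)).const_mul _).div_const _) (hlogint y)
    (by positivity) (hmeanRatio y)
  exact ⟨hmain, hlogM, (ciSup_le hmain).trans_lt hlogM⟩

/-- Weighted mean contraction (inequality (4.3) verifying condition C2 for the
Markov switching model): with `|ψ| < 1`, `p ≥ 1`, `C ∈ (0,1)`, `a ≥ 0`,
`b = (1−|ψ|^p)/(1−|ψ|)` and `C^p (ab+1) < 1`, if `E|ε_k| ≤ a` and
`Y_p(y) = ψ^p y + Σ_{k=0}^{p−1} ψ^k ε_{p−k}`, and the log-ratio is integrable, then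
`E[log(C^p (|Y_p|+1)/(|y|+1))] ≤ log(C^p (ab+1)) < 0`; in particular
`sup_{y∈ℝ} E[log(C^p (|Y_p|+1)/(|y|+1))] < 0`. -/
theorem weighted_mean_contraction
    {Ω : Type*} [MeasurableSpace Ω] (μ : Measure Ω) [IsProbabilityMeasure μ]
    (ψ a C : ℝ) (hψ : |ψ| < 1) (p : ℕ) (hp : 1 ≤ p)
    (hC0 : 0 < C) (hC1 : C < 1) (ha : 0 ≤ a)
    (b : ℝ) (hb : b = (1 - |ψ| ^ p) / (1 - |ψ|))
    (hsmall : C ^ p * (a * b + 1) < 1)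
    (ε : ℕ → Ω → ℝ)
    (hint : ∀ k, 1 ≤ k → k ≤ p → Integrable (ε k) μ)
    (hbound : ∀ k, 1 ≤ k → k ≤ p → ∫ ω, |ε k ω| ∂μ ≤ a)
    (Y : ℝ → Ω → ℝ)
    (hY : ∀ y ω, Y y ω = ψ ^ p * y + ∑ k ∈ Finset.range p, ψ ^ k * ε (p - k) ω)
    (hlogint : ∀ y : ℝ,
      Integrable (fun ω => Real.log (C ^ p * (|Y y ω| + 1) / (|y| + 1))) μ) :
    (∀ y : ℝ, ∫ ω, Real.log (C ^ p * (|Y y ω| + 1) / (|y| + 1)) ∂μ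
        ≤ Real.log (C ^ p * (a * b + 1))) ∧
    Real.log (C ^ p * (a * b + 1)) < 0 ∧
    (⨆ y : ℝ, ∫ ω, Real.log (C ^ p * (|Y y ω| + 1) / (|y| + 1)) ∂μ) < 0 :=
  weighted_mean_contraction_general μ ψ a C hψ p hC0 ha b hb hsmall ε hint hbound Y hY hlogint
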